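/- Let P ∈ ℝ[x] and Q ∈ ℝ[x] with deg P = deg Q + 1, such that P and Q have only real zeros and the zeros of P and Q interlace, so Q/P admits a J-fraction with coefficients a_0,...,a_N and b_0,...,b_{N−1}. Then the J-fraction is palindromic (a_i = a_{N−i} and b_j = b_{N−1−j}) if and only if P divides Q² − b_0² b_1² ⋯ b_{N−1}². -/

import Mathlib

/-!
Write `P_n = jden a c n` and `Q_n = jnum a c n`. Expanding the tridiagonal recurrence along
its first row instead of its last shows that `P_{N+1}` is also the denominator of the reversed
J-fraction, whose `P_N` is `Q_{N+1}`. Two consecutive denominators determine the coefficients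
(the `c_j` being nonzero), so the J-fraction is palindromic iff `Q_{N+1} = P_N`. The Casoratian
identity `Q_{N+1} P_N - Q_N P_{N+1} = ∏ c_j` makes `P_{N+1}` coprime to `Q_{N+1}` and gives
`Q_{N+1}² - ∏ c_j ≡ Q_{N+1} (Q_{N+1} - P_N) mod P_{N+1}`; hence `P_{N+1}` divides
`Q_{N+1}² - ∏ c_j` iff it divides `Q_{N+1} - P_N`, which has smaller degree, i.e. iff
`Q_{N+1} = P_N`.
-/
open Polynomial

open Polynomial

/-- Denominator polynomials of the J-fraction with diagonal coefficients `a k`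
    and squared off-diagonal coefficients `c k = b_k²`:
    `P_{-1} = 0`, `P_0 = 1`, `P_{k+1} = (x - a_k) P_k - b_{k-1}² P_{k-1}`, `b_{-1} = 1`. -/
noncomputable def jden (a c : ℕ → ℝ) : ℕ → Polynomial ℝ
  | 0 => 1
  | 1 => X - C (a 0)
  | (k + 2) => (X - C (a (k + 1))) * jden a c (k + 1) - C (c k) * jden a c k

/-- Numerator polynomials of the J-fraction:
    `Q_{-1} = -1`, `Q_0 = 0`, `Q_{k+1} = (x - a_k) Q_k - b_{k-1}² Q_{k-1}`, `b_{-1} = 1`. -/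
noncomputable def jnum (a c : ℕ → ℝ) : ℕ → Polynomial ℝ
  | 0 => 0
  | 1 => 1
  | (k + 2) => (X - C (a (k + 1))) * jnum a c (k + 1) - C (c k) * jnum a c k

namespace Polynomial

variable {R : Type*} [CommRing R] [IsDomain R]

theorem eq_of_X_sub_C_mul_sub_C_mul_eq {P S S' : R[X]} {n : ℕ} {α α' γ γ' : R}
    (hP : IsMonicOfDegree P (n + 1)) (hS : IsMonicOfDegree S n) (hS' : IsMonicOfDegree S' n)
    (hγ : γ ≠ 0) (h : (X - C α) * P - C γ * S = (X - C α') * P - C γ' * S') :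
    α = α' ∧ γ = γ' ∧ S = S' := by
  have key : C (α' - α) * P = C γ * S - C γ' * S' := by
    rw [C_sub]; linear_combination h
  rw [isMonicOfDegree_iff] at hP hS hS'
  have hα : α' - α = 0 := by
    have := congrArg (coeff · (n + 1)) key
    simp only [coeff_C_mul, coeff_sub] at this
    rwa [hP.2, coeff_eq_zero_of_natDegree_lt (hS.1.trans_lt n.lt_succ_self),
      coeff_eq_zero_of_natDegree_lt (hS'.1.trans_lt n.lt_succ_self), mul_one, mul_zero,
      mul_zero, sub_zero] at this
  rw [hα, C_0, zero_mul, eq_comm, sub_eq_zero] at key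
  have hγγ' : γ = γ' := by
    simpa [coeff_C_mul, hS.2, hS'.2] using congrArg (coeff · n) key
  subst hγγ'
  exact ⟨(sub_eq_zero.1 hα).symm, rfl, mul_left_cancel₀ (C_ne_zero.2 hγ) key⟩

theorem dvd_sq_sub_C_iff_eq {K : Type*} [Field K] {P P' Q Q' : K[X]} {π : K} (hπ : π ≠ 0)
    (hdet : Q * P' - Q' * P = C π) (hdeg : (Q - P').degree < P.degree) :
    P ∣ Q ^ 2 - C π ↔ Q = P' := by
  have hcop : IsCoprime P Q := by
    have hinv : C π⁻¹ * C π = (1 : K[X]) := by rw [← C_mul, inv_mul_cancel₀ hπ, C_1]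
    exact ⟨-(C π⁻¹ * Q'), C π⁻¹ * P', by linear_combination C π⁻¹ * hdet + hinv⟩
  have hsplit : Q ^ 2 - C π = Q * (Q - P') + Q' * P := by rw [← hdet]; ring
  rw [hsplit, dvd_add_left (dvd_mul_left _ _), ← sub_eq_zero]
  exact ⟨fun h => eq_zero_of_dvd_of_degree_lt (hcop.dvd_of_dvd_mul_left h) hdeg,
    fun h => by rw [h, mul_zero]; exact dvd_zero _⟩

end Polynomial

section JFraction

variable (a c : ℕ → ℝ)

theorem jden_add_two (k : ℕ) :
    jden a c (k + 2) = (X - C (a (k + 1))) * jden a c (k + 1) - C (c k) * jden a c k := by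
  rw [jden]

theorem jnum_add_two (k : ℕ) :
    jnum a c (k + 2) = (X - C (a (k + 1))) * jnum a c (k + 1) - C (c k) * jnum a c k := by
  rw [jnum]

theorem isMonicOfDegree_jden : ∀ n, IsMonicOfDegree (jden a c n) n
  | 0 => by rw [isMonicOfDegree_zero_iff, jden]
  | 1 => isMonicOfDegree_X_sub_one _
  | k + 2 => by
    rw [jden_add_two, show k + 2 = 1 + (k + 1) by omega]
    refine ((isMonicOfDegree_X_sub_one _).mul (isMonicOfDegree_jden (k + 1))).sub ?_
    calc (C (c k) * jden a c k).natDegree ≤ (jden a c k).natDegree := natDegree_C_mul_le _ _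
      _ = k := (isMonicOfDegree_jden k).natDegree_eq
      _ < 1 + (k + 1) := by omega

theorem jnum_succ_eq_jden_shift : ∀ n,
    jnum a c (n + 1) = jden (fun i => a (i + 1)) (fun j => c (j + 1)) n
  | 0 => rfl
  | 1 => by simp [jnum, jden]
  | k + 2 => by
    rw [jnum_add_two, jden_add_two, jnum_succ_eq_jden_shift (k + 1), jnum_succ_eq_jden_shift k]

theorem jden_add_two_eq_shift : ∀ n,
    jden a c (n + 2) = (X - C (a 0)) * jden (fun i => a (i + 1)) (fun j => c (j + 1)) (n + 1)
      - C (c 0) * jden (fun i => a (i + 2)) (fun j => c (j + 2)) n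
  | 0 => by simp only [jden]; ring
  | 1 => by simp only [jden]; ring
  | k + 2 => by
    rw [jden_add_two, jden_add_two_eq_shift (k + 1), jden_add_two_eq_shift k,
      jden_add_two (fun i => a (i + 1)) (fun j => c (j + 1)) (k + 1),
      jden_add_two (fun i => a (i + 2)) (fun j => c (j + 2)) k]
    ring

theorem jden_reverse : ∀ n,
    jden a c n = jden (fun i => a (n - 1 - i)) (fun j => c (n - 2 - j)) n
  | 0 => rfl
  | 1 => rfl
  | k + 2 => by
    conv_rhs => rw [jden_add_two_eq_shift]
    rw [jden_add_two, jden_reverse (k + 1), jden_reverse k]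
    congr! 5 <;> omega

theorem jnum_succ_mul_jden_sub_jnum_mul_jden_succ : ∀ n,
    jnum a c (n + 1) * jden a c n - jnum a c n * jden a c (n + 1) =
      C (∏ j ∈ Finset.range n, c j)
  | 0 => by simp [jnum, jden]
  | k + 1 => by
    rw [jnum_add_two, jden_add_two, Finset.prod_range_succ, C_mul,
      ← jnum_succ_mul_jden_sub_jnum_mul_jden_succ k]
    ring

theorem degree_jnum_succ_sub_jden_lt (N : ℕ) :
    (jnum a c (N + 1) - jden a c N).degree < (jden a c (N + 1)).degree := by
  apply degree_lt_degree
  rw [(isMonicOfDegree_jden a c (N + 1)).natDegree_eq]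
  refine (natDegree_sub_le _ _).trans_lt ?_
  rw [jnum_succ_eq_jden_shift, (isMonicOfDegree_jden _ _ N).natDegree_eq,
    (isMonicOfDegree_jden a c N).natDegree_eq, max_self]
  exact N.lt_succ_self

end JFraction

theorem jden_congr {a c a' c' : ℕ → ℝ} : ∀ {n : ℕ}, (∀ i < n, a i = a' i) →
    (∀ j, j + 1 < n → c j = c' j) → jden a c n = jden a' c' n
  | 0, _, _ => rfl
  | 1, ha, _ => by rw [jden, jden, ha 0 one_pos]
  | k + 2, ha, hc => by
    rw [jden_add_two, jden_add_two, ha (k + 1) (by omega), hc k (by omega),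
      jden_congr (fun i hi => ha i (by omega)) (fun j hj => hc j (by omega)),
      jden_congr (fun i hi => ha i (by omega)) (fun j hj => hc j (by omega))]

theorem jden_succ_eq_and_jden_eq_iff {a c a' c' : ℕ → ℝ} (hc : ∀ j, c j ≠ 0) (n : ℕ) :
    (jden a c (n + 1) = jden a' c' (n + 1) ∧ jden a c n = jden a' c' n) ↔
      (∀ i ≤ n, a i = a' i) ∧ ∀ j < n, c j = c' j := by
  refine ⟨fun h => ?_, fun ⟨ha, hc'⟩ =>
    ⟨jden_congr (fun i hi => ha i (by omega)) (fun j hj => hc' j (by omega)),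
      jden_congr (fun i hi => ha i (by omega)) (fun j hj => hc' j (by omega))⟩⟩
  induction n with
  | zero =>
    have h0 : a 0 = a' 0 := C_injective (sub_right_injective h.1)
    exact ⟨fun i hi => by rwa [Nat.le_zero.1 hi], fun j hj => absurd hj j.not_lt_zero⟩
  | succ n ih =>
    obtain ⟨h₂, h₁⟩ := h
    rw [jden_add_two, jden_add_two, h₁] at h₂
    obtain ⟨ha, hcn, h₀⟩ := eq_of_X_sub_C_mul_sub_C_mul_eq (isMonicOfDegree_jden a' c' (n + 1))
      (isMonicOfDegree_jden a c n) (isMonicOfDegree_jden a' c' n) (hc n) h₂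
    obtain ⟨iha, ihc⟩ := ih ⟨h₁, h₀⟩
    refine ⟨fun i hi => ?_, fun j hj => ?_⟩
    · rcases Nat.le_succ_iff.1 hi with hi | rfl
      exacts [iha i hi, ha]
    · rcases Nat.lt_succ_iff_lt_or_eq.1 hj with hj | rfl
      exacts [ihc j hj, hcn]

theorem palindromic_iff_jden_eq_jnum_succ {a c : ℕ → ℝ} (hc : ∀ j, c j ≠ 0) (N : ℕ) :
    ((∀ i ≤ N, a i = a (N - i)) ∧ ∀ j < N, c j = c (N - 1 - j)) ↔
      jden a c N = jnum a c (N + 1) := by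
  have hP : jden a c (N + 1) = jden (fun i => a (N - i)) (fun j => c (N - 1 - j)) (N + 1) := by
    rw [jden_reverse]
    exact jden_congr (fun i _ => congrArg a (by omega)) (fun j _ => congrArg c (by omega))
  have hQ : jnum a c (N + 1) = jden (fun i => a (N - i)) (fun j => c (N - 1 - j)) N := by
    rw [jnum_succ_eq_jden_shift, jden_reverse]
    exact jden_congr (fun i _ => congrArg a (by omega)) (fun j _ => congrArg c (by omega))
  rw [hQ, ← jden_succ_eq_and_jden_eq_iff hc N, and_iff_right hP]

/-- **Palindromic J-fractions.** Let `Q/P` be the J-fraction with coefficients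
    `a_0, ..., a_N` and `b_0, ..., b_{N-1}` (encoded via `c j = b_j² > 0`). The
    J-fraction is palindromic (`a_i = a_{N-i}`, `b_j = b_{N-1-j}`) iff `P` divides
    `Q² - b_0² b_1² ⋯ b_{N-1}²`. -/
theorem stmt_10 (N : ℕ) (a c : ℕ → ℝ) (hc : ∀ j, 0 < c j)
    (P Q : Polynomial ℝ)
    (hP : P = jden a c (N + 1)) (hQ : Q = jnum a c (N + 1)) :
    ((∀ i ≤ N, a i = a (N - i)) ∧ (∀ j < N, c j = c (N - 1 - j))) ↔
      P ∣ Q ^ 2 - C (∏ j ∈ Finset.range N, c j) := by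
  subst hP hQ
  have hc₀ : ∀ j, c j ≠ 0 := fun j => (hc j).ne'
  rw [palindromic_iff_jden_eq_jnum_succ hc₀, eq_comm,
    dvd_sq_sub_C_iff_eq (Finset.prod_ne_zero_iff.2 fun j _ => hc₀ j)
      (jnum_succ_mul_jden_sub_jnum_mul_jden_succ a c N) (degree_jnum_succ_sub_jden_lt a c N)]
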